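/- arXiv:2108.13706 — 4 statements merged into one kernel-verified Lean document; each statement's English description precedes it below -/
import Mathlib

section
/- Let α ∈ (0, π) with α/π irrational. If f : ℝ → ℝ is continuous and 2π-periodic and ∫_c^{c+2α} f(x) dx = 0 for all c ∈ ℝ, then f = 0. -/
open Real intervalIntegral

/-!
If every integral of `f` over an arc of length `2α` vanishes, differentiating
`c ↦ ∫ x in c..c + 2α, f x` shows that `2α` is a period of `f`. Together with `2π`
it generates a subgroup of periods which is dense because `α / π` is irrational, so the
continuous function `f` is constant; the vanishing integral forces that constant to be `0`.
-/

theorem Function.periodic_of_forall_intervalIntegral_eq {E : Type*} [NormedAddCommGroup E]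
    [NormedSpace ℝ E] [CompleteSpace E] {f : ℝ → E} {T : ℝ} (C : E)
    (hf : Continuous f) (h : ∀ c : ℝ, ∫ x in c..c + T, f x = C) : Function.Periodic f T := by
  intro x
  let F : ℝ → E := fun u => ∫ t in (0 : ℝ)..u, f t
  have hF : ∀ u, HasDerivAt F (f u) u := fun u =>
    integral_hasDerivAt_right (hf.intervalIntegrable 0 u)
      hf.aestronglyMeasurable.stronglyMeasurableAtFilter hf.continuousAt
  have hdiff : (fun c => F (c + T) - F c) = fun _ => C := funext fun c =>
    (integral_interval_sub_left (hf.intervalIntegrable 0 _) (hf.intervalIntegrable 0 c)).trans (h c)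
  have hderiv : HasDerivAt (fun c => F (c + T) - F c) (f (x + T) - f x) x :=
    ((hF (x + T)).comp_add_const x T).fun_sub (hF x)
  rw [hdiff] at hderiv
  exact sub_eq_zero.1 (hderiv.unique (hasDerivAt_const x C))

theorem Function.Periodic.of_mem_addSubgroupClosure {α β : Type*} [AddGroup α] {f : α → β}
    {S : Set α} (hS : ∀ p ∈ S, Function.Periodic f p) {p : α} (hp : p ∈ AddSubgroup.closure S) :
    Function.Periodic f p := by
  induction hp using AddSubgroup.closure_induction with
  | mem p hp => exact hS p hp
  | zero => exact fun x => congrArg f (add_zero x)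
  | add p q _ _ hp hq => exact hp.add_period hq
  | neg p _ hp => exact hp.neg

theorem Continuous.eq_const_of_dense_periods {α β : Type*} [AddMonoid α] [TopologicalSpace α]
    [TopologicalSpace β] [T2Space β] {f : α → β} (hf : Continuous f) {S : Set α} (hS : Dense S)
    (hper : ∀ p ∈ S, Function.Periodic f p) : f = Function.const α (f 0) :=
  hf.ext_on hS continuous_const fun p hp => by simpa using hper p hp 0

theorem arc_pompeiu_irrational_general (α : ℝ)
    (hirr : Irrational (α / π)) (f : ℝ → ℝ) (hf : Continuous f)
    (hper : Function.Periodic f (2 * π))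
    (hint : ∀ c : ℝ, ∫ x in c..(c + 2 * α), f x = 0) :
    f = 0 := by
  have hper_arc : Function.Periodic f (2 * α) :=
    Function.periodic_of_forall_intervalIntegral_eq 0 hf hint
  have hdense : Dense (AddSubgroup.closure {2 * α, 2 * π} : Set ℝ) := by
    rwa [dense_addSubgroupClosure_pair_iff, mul_div_mul_left _ _ two_ne_zero]
  have hperiods : ∀ p ∈ AddSubgroup.closure {2 * α, 2 * π}, Function.Periodic f p :=
    fun _ => Function.Periodic.of_mem_addSubgroupClosure (by rintro q (rfl | rfl) <;> assumption)
  obtain ⟨c, rfl⟩ : ∃ c, f = Function.const ℝ c :=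
    ⟨_, hf.eq_const_of_dense_periods hdense hperiods⟩
  have hα : α ≠ 0 := fun h => hirr.ne_zero (by simp [h])
  have hc : c = 0 := by simpa [hα] using hint 0
  rw [hc]
  rfl

theorem arc_pompeiu_irrational (α : ℝ) (hα : α ∈ Set.Ioo 0 π)
    (hirr : Irrational (α / π)) (f : ℝ → ℝ) (hf : Continuous f)
    (hper : Function.Periodic f (2 * π))
    (hint : ∀ c : ℝ, ∫ x in c..(c + 2 * α), f x = 0) :
    f = 0 :=
  arc_pompeiu_irrational_general α hirr f hf hper hint
end

section
/- Let α = πm/n with m, n positive integers, m < n. Then the function f(x) = cos(nx) is continuous, 2π-periodic, not identically zero, and satisfies ∫_c^{c+2α} f(x) dx = 0 for all c ∈ ℝ. -/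
open Real intervalIntegral

theorem arc_fails_pompeiu_rational (m n : ℕ) (hm : 0 < m) (hmn : m < n)
    (α : ℝ) (hα : α = π * m / n) :
    Continuous (fun x : ℝ => Real.cos (n * x)) ∧
    Function.Periodic (fun x : ℝ => Real.cos (n * x)) (2 * π) ∧
    (fun x : ℝ => Real.cos (n * x)) ≠ 0 ∧
    ∀ c : ℝ, ∫ x in c..(c + 2 * α), Real.cos (n * x) = 0 := by
  have hn : 0 < n := hm.trans hmn
  have hn' : (n : ℝ) ≠ 0 := Nat.cast_ne_zero.mpr hn.ne'
  refine ⟨by continuity, ?_, ?_, ?_⟩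
  · intro x
    simp only
    have h2 : (n : ℝ) * (x + 2 * π) = n * x + (n : ℤ) * (2 * π) := by
      push_cast; ring
    rw [h2, Real.cos_add_int_mul_two_pi]
  · intro h
    have := congrFun h 0
    simp at this
  · intro c
    rw [intervalIntegral.integral_comp_mul_left (fun x => Real.cos x) hn',
      integral_cos]
    have : (n : ℝ) * (c + 2 * α) = n * c + 2 * π * m := by
      rw [hα]; field_simp
    have h3 : (n:ℝ) * c + 2 * π * m = n * c + (m : ℤ) * (2 * π) := by
      push_cast; ring
    rw [this, h3, Real.sin_add_int_mul_two_pi, sub_self, smul_zero]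
end

section
/- Let θ : (0, D) → (0, ∞) be smooth with θ extending continuously to [0, D] with θ(0) = θ(D) = 0. Suppose ψ₁, ψ₂ : [0, D] → ℝ are smooth and both satisfy ψ'' + (θ'/θ)ψ' + λψ = 0 on (0, D) for the same λ ∈ ℝ. Then ψ₁ and ψ₂ are linearly dependent. -/
open Set

lemma gronwall_fwd {E : ℝ → ℝ} {K a b : ℝ} (hab : a ≤ b)
    (hd : ∀ t ∈ Icc a b, ∃ e, HasDerivAt E e t ∧ |e| ≤ K * E t)
    (hnn : ∀ t ∈ Icc a b, 0 ≤ E t) (ha : E a = 0) : E b = 0 := by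
  set G : ℝ → ℝ := fun t => E t * Real.exp (-K * t) with hG
  have hGd : ∀ t (ht : t ∈ Icc a b), HasDerivAt G
      ((Classical.choose (hd t ht) - K * E t) * Real.exp (-K * t)) t := by
    intro t ht
    obtain ⟨he, _⟩ := Classical.choose_spec (hd t ht)
    have hexp : HasDerivAt (fun u : ℝ => Real.exp (-K * u)) (Real.exp (-K * t) * (-K * 1)) t :=
      ((hasDerivAt_id t).const_mul (-K)).exp
    have : HasDerivAt G (Classical.choose (hd t ht) * Real.exp (-K * t)
        + E t * (Real.exp (-K * t) * (-K * 1))) t := he.mul hexp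
    convert this using 1
    ring
  have hmono : AntitoneOn G (Icc a b) := by
    apply antitoneOn_of_deriv_nonpos (convex_Icc a b)
    · exact fun t ht => ((hGd t ht).continuousAt).continuousWithinAt
    · intro t ht
      rw [interior_Icc] at ht
      exact ((hGd t (Ioo_subset_Icc_self ht)).differentiableAt).differentiableWithinAt
    · intro t ht
      rw [interior_Icc] at ht
      have ht' := Ioo_subset_Icc_self ht
      rw [(hGd t ht').deriv]
      obtain ⟨he, hle⟩ := Classical.choose_spec (hd t ht')
      have h1 : Classical.choose (hd t ht') - K * E t ≤ 0 := by
        have := le_abs_self (Classical.choose (hd t ht'))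
        linarith
      exact mul_nonpos_of_nonpos_of_nonneg h1 (Real.exp_pos _).le
  have h1 : G b ≤ G a := hmono (left_mem_Icc.2 hab) (right_mem_Icc.2 hab) hab
  have h2 : 0 ≤ G b := mul_nonneg (hnn b (right_mem_Icc.2 hab)) (Real.exp_pos _).le
  have h3 : G a = 0 := by simp [hG, ha]
  have h4 : G b = 0 := le_antisymm (h3 ▸ h1) h2
  have := Real.exp_pos (-K * b)
  have : E b * Real.exp (-K * b) = 0 := h4
  exact (mul_eq_zero.1 this).resolve_right (Real.exp_pos _).ne'

lemma gronwall_bwd {E : ℝ → ℝ} {K a b : ℝ} (hab : a ≤ b)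
    (hd : ∀ t ∈ Icc a b, ∃ e, HasDerivAt E e t ∧ |e| ≤ K * E t)
    (hnn : ∀ t ∈ Icc a b, 0 ≤ E t) (hb : E b = 0) : E a = 0 := by
  set G : ℝ → ℝ := fun t => E t * Real.exp (K * t) with hG
  have hGd : ∀ t (ht : t ∈ Icc a b), HasDerivAt G
      ((Classical.choose (hd t ht) + K * E t) * Real.exp (K * t)) t := by
    intro t ht
    obtain ⟨he, _⟩ := Classical.choose_spec (hd t ht)
    have hexp : HasDerivAt (fun u : ℝ => Real.exp (K * u)) (Real.exp (K * t) * (K * 1)) t :=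
      ((hasDerivAt_id t).const_mul K).exp
    have : HasDerivAt G (Classical.choose (hd t ht) * Real.exp (K * t)
        + E t * (Real.exp (K * t) * (K * 1))) t := he.mul hexp
    convert this using 1
    ring
  have hmono : MonotoneOn G (Icc a b) := by
    apply monotoneOn_of_deriv_nonneg (convex_Icc a b)
    · exact fun t ht => ((hGd t ht).continuousAt).continuousWithinAt
    · intro t ht
      rw [interior_Icc] at ht
      exact ((hGd t (Ioo_subset_Icc_self ht)).differentiableAt).differentiableWithinAt
    · intro t ht
      rw [interior_Icc] at ht
      have ht' := Ioo_subset_Icc_self ht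
      rw [(hGd t ht').deriv]
      obtain ⟨he, hle⟩ := Classical.choose_spec (hd t ht')
      have h1 : 0 ≤ Classical.choose (hd t ht') + K * E t := by
        have := neg_abs_le (Classical.choose (hd t ht'))
        linarith
      exact mul_nonneg h1 (Real.exp_pos _).le
  have h1 : G a ≤ G b := hmono (left_mem_Icc.2 hab) (right_mem_Icc.2 hab) hab
  have h2 : 0 ≤ G a := mul_nonneg (hnn a (left_mem_Icc.2 hab)) (Real.exp_pos _).le
  have h3 : G b = 0 := by simp [hG, hb]
  have h4 : G a = 0 := le_antisymm (h3 ▸ h1) h2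
  have : E a * Real.exp (K * a) = 0 := h4
  exact (mul_eq_zero.1 this).resolve_right (Real.exp_pos _).ne'

set_option maxHeartbeats 1000000 in
theorem radial_eigenvalues_simple (D : ℝ) (hD : 0 < D) (θ ψ₁ ψ₂ : ℝ → ℝ) (lam : ℝ)
    (hθpos : ∀ t ∈ Ioo 0 D, 0 < θ t)
    (hθsmooth : ContDiffOn ℝ (⊤ : ℕ∞) θ (Ioo 0 D))
    (hθcont : ContinuousOn θ (Icc 0 D))
    (hθ0 : θ 0 = 0) (hθD : θ D = 0)
    (hψ₁ : ContDiffOn ℝ (⊤ : ℕ∞) ψ₁ (Icc 0 D))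
    (hψ₂ : ContDiffOn ℝ (⊤ : ℕ∞) ψ₂ (Icc 0 D))
    (hODE₁ : ∀ t ∈ Ioo 0 D,
      deriv (deriv ψ₁) t + (deriv θ t / θ t) * deriv ψ₁ t + lam * ψ₁ t = 0)
    (hODE₂ : ∀ t ∈ Ioo 0 D,
      deriv (deriv ψ₂) t + (deriv θ t / θ t) * deriv ψ₂ t + lam * ψ₂ t = 0) :
    ∃ a b : ℝ, (a, b) ≠ (0, 0) ∧ ∀ t ∈ Icc 0 D, a * ψ₁ t + b * ψ₂ t = 0 := by
  -- basic differentiability facts on Ioo 0 D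
  have hIccmem : ∀ t ∈ Ioo 0 D, Icc 0 D ∈ nhds t := fun t ht => Icc_mem_nhds ht.1 ht.2
  have hψ₁o : ContDiffOn ℝ (⊤ : ℕ∞) ψ₁ (Ioo 0 D) := hψ₁.mono Ioo_subset_Icc_self
  have hψ₂o : ContDiffOn ℝ (⊤ : ℕ∞) ψ₂ (Ioo 0 D) := hψ₂.mono Ioo_subset_Icc_self
  have hψ₁' : ContDiffOn ℝ (⊤ : ℕ∞) (deriv ψ₁) (Ioo 0 D) :=
    hψ₁o.deriv_of_isOpen isOpen_Ioo (by simp)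
  have hψ₂' : ContDiffOn ℝ (⊤ : ℕ∞) (deriv ψ₂) (Ioo 0 D) :=
    hψ₂o.deriv_of_isOpen isOpen_Ioo (by simp)
  have hd1 : ∀ t ∈ Ioo 0 D, HasDerivAt ψ₁ (deriv ψ₁ t) t := fun t ht =>
    ((hψ₁.contDiffAt (hIccmem t ht)).differentiableAt (by simp)).hasDerivAt
  have hd2 : ∀ t ∈ Ioo 0 D, HasDerivAt ψ₂ (deriv ψ₂ t) t := fun t ht =>
    ((hψ₂.contDiffAt (hIccmem t ht)).differentiableAt (by simp)).hasDerivAt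
  have hd1' : ∀ t ∈ Ioo 0 D, HasDerivAt (deriv ψ₁) (deriv (deriv ψ₁) t) t := fun t ht =>
    ((hψ₁'.contDiffAt (isOpen_Ioo.mem_nhds ht)).differentiableAt (by simp)).hasDerivAt
  have hd2' : ∀ t ∈ Ioo 0 D, HasDerivAt (deriv ψ₂) (deriv (deriv ψ₂) t) t := fun t ht =>
    ((hψ₂'.contDiffAt (isOpen_Ioo.mem_nhds ht)).differentiableAt (by simp)).hasDerivAt
  have hdθ : ∀ t ∈ Ioo 0 D, HasDerivAt θ (deriv θ t) t := fun t ht =>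
    ((hθsmooth.contDiffAt (isOpen_Ioo.mem_nhds ht)).differentiableAt (by simp)).hasDerivAt
  set W : ℝ → ℝ := fun t => deriv ψ₁ t * ψ₂ t - deriv ψ₂ t * ψ₁ t with hWdef
  set F : ℝ → ℝ := fun t => θ t * W t with hFdef
  -- F has derivative zero on Ioo
  have hF0 : ∀ t ∈ Ioo 0 D, HasDerivAt F 0 t := by
    intro t ht
    have hne : θ t ≠ 0 := (hθpos t ht).ne'
    have hW : HasDerivAt W
        ((deriv (deriv ψ₁) t * ψ₂ t + deriv ψ₁ t * deriv ψ₂ t)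
          - (deriv (deriv ψ₂) t * ψ₁ t + deriv ψ₂ t * deriv ψ₁ t)) t :=
      ((hd1' t ht).mul (hd2 t ht)).sub ((hd2' t ht).mul (hd1 t ht))
    have hF : HasDerivAt F _ t := (hdθ t ht).mul hW
    have e1 := hODE₁ t ht
    have e2 := hODE₂ t ht
    have hA : deriv (deriv ψ₁) t = -(deriv θ t / θ t * deriv ψ₁ t) - lam * ψ₁ t := by linarith
    have hB : deriv (deriv ψ₂) t = -(deriv θ t / θ t * deriv ψ₂ t) - lam * ψ₂ t := by linarith
    convert hF using 1
    rw [hA, hB]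
    field_simp
    ring
  -- F is constant on Ioo
  have hFconst : ∀ x ∈ Ioo 0 D, ∀ y ∈ Ioo 0 D, x ≤ y → F y = F x := by
    intro x hx y hy hxy
    have hsub : Icc x y ⊆ Ioo 0 D := Icc_subset_Ioo hx.1 hy.2
    have := constant_of_has_deriv_right_zero
      (f := F) (a := x) (b := y)
      (fun t ht => ((hF0 t (hsub ht)).continuousAt).continuousWithinAt)
      (fun t ht => ((hF0 t (hsub (Ico_subset_Icc_self ht))).hasDerivWithinAt))
    exact this y (right_mem_Icc.2 hxy)
  set t₀ : ℝ := D / 2 with ht₀def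
  have ht₀ : t₀ ∈ Ioo 0 D := ⟨half_pos hD, half_lt_self hD⟩
  -- limit of F at 0 is 0
  have hne0 : (nhdsWithin (0:ℝ) (Ioo 0 D)).NeBot := by
    rw [← mem_closure_iff_nhdsWithin_neBot, closure_Ioo hD.ne]
    exact left_mem_Icc.2 hD.le
  have hWt₀ : W t₀ = 0 := by
    set Wt : ℝ → ℝ := fun t => derivWithin ψ₁ (Icc 0 D) t * ψ₂ t
        - derivWithin ψ₂ (Icc 0 D) t * ψ₁ t with hWtdef
    have hWtcont : ContinuousOn Wt (Icc 0 D) := by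
      apply ContinuousOn.sub
      · exact (hψ₁.continuousOn_derivWithin (uniqueDiffOn_Icc hD) (by simp)).mul hψ₂.continuousOn
      · exact (hψ₂.continuousOn_derivWithin (uniqueDiffOn_Icc hD) (by simp)).mul hψ₁.continuousOn
    have hFt : Filter.Tendsto (fun t => θ t * Wt t) (nhdsWithin 0 (Ioo 0 D)) (nhds 0) := by
      have h0 : (0:ℝ) ∈ Icc 0 D := left_mem_Icc.2 hD.le
      have := ((hθcont 0 h0).mul (hWtcont 0 h0))
      have h2 : Filter.Tendsto (fun t => θ t * Wt t) (nhdsWithin 0 (Icc 0 D))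
          (nhds (θ 0 * Wt 0)) := this
      rw [hθ0, zero_mul] at h2
      exact h2.mono_left (nhdsWithin_mono _ Ioo_subset_Icc_self)
    have hFeq : ∀ t ∈ Ioo 0 D, F t = θ t * Wt t := by
      intro t ht
      simp only [hFdef, hWdef, hWtdef]
      rw [derivWithin_of_mem_nhds (hIccmem t ht), derivWithin_of_mem_nhds (hIccmem t ht)]
    have hFt' : Filter.Tendsto F (nhdsWithin 0 (Ioo 0 D)) (nhds 0) := by
      refine hFt.congr' ?_
      filter_upwards [self_mem_nhdsWithin] with t ht
      exact (hFeq t ht).symm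
    have hFc : Filter.Tendsto F (nhdsWithin 0 (Ioo 0 D)) (nhds (F t₀)) := by
      have : ∀ᶠ t in nhdsWithin (0:ℝ) (Ioo 0 D), F t = F t₀ := by
        filter_upwards [self_mem_nhdsWithin] with t ht
        rcases le_total t t₀ with h | h
        · exact (hFconst t ht t₀ ht₀ h).symm
        · exact hFconst t₀ ht₀ t ht h
      exact Filter.Tendsto.congr' (by filter_upwards [this] with t ht; exact ht.symm)
        tendsto_const_nhds
    have : F t₀ = 0 := tendsto_nhds_unique hFc hFt'
    have hne : θ t₀ ≠ 0 := (hθpos t₀ ht₀).ne'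
    simp only [hFdef] at this
    exact (mul_eq_zero.1 this).resolve_left hne
  -- choose a dependent combination vanishing to first order at t₀
  obtain ⟨a, b, hab, hv0, hv1⟩ :
      ∃ a b : ℝ, (a, b) ≠ (0, 0) ∧ a * ψ₁ t₀ + b * ψ₂ t₀ = 0 ∧
        a * deriv ψ₁ t₀ + b * deriv ψ₂ t₀ = 0 := by
    by_cases h2 : ψ₂ t₀ ≠ 0
    · refine ⟨ψ₂ t₀, -ψ₁ t₀, ?_, by ring, ?_⟩
      · simp [Prod.ext_iff, h2]
      · simp only [hWdef] at hWt₀; nlinarith [hWt₀]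
    · by_cases h2' : deriv ψ₂ t₀ ≠ 0
      · refine ⟨deriv ψ₂ t₀, -deriv ψ₁ t₀, ?_, ?_, by ring⟩
        · simp [Prod.ext_iff, h2']
        · simp only [hWdef] at hWt₀; nlinarith [hWt₀]
      · push_neg at h2 h2'
        exact ⟨0, 1, by simp, by simp [h2], by simp [h2']⟩
  refine ⟨a, b, hab, ?_⟩
  set φ : ℝ → ℝ := fun t => a * ψ₁ t + b * ψ₂ t with hφdef
  set φ' : ℝ → ℝ := fun t => a * deriv ψ₁ t + b * deriv ψ₂ t with hφ'def
  set E : ℝ → ℝ := fun t => φ t ^ 2 + φ' t ^ 2 with hEdef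
  have hEt₀ : E t₀ = 0 := by simp [hEdef, hφdef, hφ'def, hv0, hv1]
  have hEnn : ∀ t, 0 ≤ E t := fun t => add_nonneg (sq_nonneg _) (sq_nonneg _)
  have hEeq : ∀ t, E t = φ t ^ 2 + φ' t ^ 2 := fun t => rfl
  -- E vanishes on all of Ioo 0 D via Gronwall on compact subintervals
  have hEzero : ∀ s ∈ Ioo 0 D, E s = 0 := by
    intro s hs
    set p := min s t₀ with hp
    set q := max s t₀ with hq
    have hpq : p ≤ q := min_le_max
    have hsub : Icc p q ⊆ Ioo 0 D := by
      apply Icc_subset_Ioo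
      · exact lt_min hs.1 ht₀.1
      · exact max_lt hs.2 ht₀.2
    -- bound on the coefficient
    have hccont : ContinuousOn (fun t => deriv θ t / θ t) (Icc p q) := by
      apply ContinuousOn.div
      · exact ((hθsmooth.continuousOn_deriv_of_isOpen isOpen_Ioo (by simp)).mono hsub)
      · exact hθsmooth.continuousOn.mono hsub
      · exact fun t ht => (hθpos t (hsub ht)).ne'
    obtain ⟨M, hM⟩ := isCompact_Icc.exists_bound_of_continuousOn hccont
    set K := |1 - lam| + 2 * M with hK
    have hd : ∀ t ∈ Icc p q, ∃ e, HasDerivAt E e t ∧ |e| ≤ K * E t := by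
      intro t ht
      have ht' := hsub ht
      have hne : θ t ≠ 0 := (hθpos t ht').ne'
      have hφd : HasDerivAt φ (φ' t) t :=
        ((hd1 t ht').const_mul a).add ((hd2 t ht').const_mul b)
      have hφ'd : HasDerivAt φ'
          (a * deriv (deriv ψ₁) t + b * deriv (deriv ψ₂) t) t :=
        ((hd1' t ht').const_mul a).add ((hd2' t ht').const_mul b)
      have hode : a * deriv (deriv ψ₁) t + b * deriv (deriv ψ₂) t
          = -(deriv θ t / θ t) * φ' t - lam * φ t := by
        have e1 := hODE₁ t ht'
        have e2 := hODE₂ t ht'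
        simp only [hφdef, hφ'def]
        linear_combination a * e1 + b * e2
      rw [hode] at hφ'd
      have hEd : HasDerivAt E
          (2 * φ t * φ' t + 2 * φ' t * (-(deriv θ t / θ t) * φ' t - lam * φ t)) t := by
        have h1 : HasDerivAt (fun u => φ u ^ 2) (2 * φ t * φ' t) t := by
          have : HasDerivAt (fun u => φ u ^ 2) _ t := hφd.pow 2
          simpa using this
        have h2 : HasDerivAt (fun u => φ' u ^ 2)
            (2 * φ' t * (-(deriv θ t / θ t) * φ' t - lam * φ t)) t := by
          have : HasDerivAt (fun u => φ' u ^ 2) _ t := hφ'd.pow 2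
          simpa using this
        exact h1.add h2
      refine ⟨_, hEd, ?_⟩
      have hMt : |deriv θ t / θ t| ≤ M := by
        have := hM t ht
        rwa [Real.norm_eq_abs] at this
      have hM0 : 0 ≤ M := le_trans (abs_nonneg _) hMt
      have hc1 := (abs_le.1 hMt).1
      have hc2 := (abs_le.1 hMt).2
      have hl1 := neg_abs_le (1 - lam)
      have hl2 := le_abs_self (1 - lam)
      rw [abs_le, hEeq t, hK]
      set c := deriv θ t / θ t with hcdef
      generalize φ t = x
      generalize φ' t = y
      clear * - hc1 hc2 hl1 hl2 hM0
      constructor <;>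
        nlinarith [mul_nonneg (sub_nonneg.2 hl2) (sq_nonneg (x + y)),
          mul_nonneg (sub_nonneg.2 hl2) (sq_nonneg (x - y)),
          mul_nonneg (show (0:ℝ) ≤ |1 - lam| + (1 - lam) by linarith) (sq_nonneg (x - y)),
          mul_nonneg (show (0:ℝ) ≤ |1 - lam| + (1 - lam) by linarith) (sq_nonneg (x + y)),
          mul_nonneg (show (0:ℝ) ≤ M - c by linarith) (sq_nonneg y),
          mul_nonneg (show (0:ℝ) ≤ M + c by linarith) (sq_nonneg y)]
    rcases le_total s t₀ with h | h
    · have h0 := gronwall_bwd hpq hd (fun t _ => hEnn t)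
        (show E q = 0 by rw [hq, max_eq_right h]; exact hEt₀)
      rwa [hp, min_eq_left h] at h0
    · have h0 := gronwall_fwd hpq hd (fun t _ => hEnn t)
        (show E p = 0 by rw [hp, min_eq_right h]; exact hEt₀)
      rwa [hq, max_eq_left h] at h0
  -- φ vanishes on Ioo, extend to Icc by continuity
  have hφzero : ∀ s ∈ Ioo 0 D, φ s = 0 := by
    intro s hs
    have := hEzero s hs
    simp only [hEdef] at this
    nlinarith [sq_nonneg (φ s), sq_nonneg (φ' s)]
  have hφcont : ContinuousOn φ (Icc 0 D) :=
    ((hψ₁.continuousOn.const_smul a).add (hψ₂.continuousOn.const_smul b))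
  intro t ht
  rcases eq_or_lt_of_le ht.1 with h0 | h0
  · -- t = 0
    have hne0' : (nhdsWithin (0:ℝ) (Ioo 0 D)).NeBot := hne0
    have hc : Filter.Tendsto φ (nhdsWithin 0 (Ioo 0 D)) (nhds (φ 0)) :=
      ((hφcont 0 (left_mem_Icc.2 hD.le)).mono_left (nhdsWithin_mono _ Ioo_subset_Icc_self))
    have hz : Filter.Tendsto φ (nhdsWithin 0 (Ioo 0 D)) (nhds 0) := by
      refine Filter.Tendsto.congr' ?_ tendsto_const_nhds
      filter_upwards [self_mem_nhdsWithin] with u hu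
      exact (hφzero u hu).symm
    have := tendsto_nhds_unique hc hz
    rw [← h0]; exact this
  rcases eq_or_lt_of_le ht.2 with hD' | hD'
  · -- t = D
    have hneD : (nhdsWithin D (Ioo 0 D)).NeBot := by
      rw [← mem_closure_iff_nhdsWithin_neBot, closure_Ioo hD.ne]
      exact right_mem_Icc.2 hD.le
    have hc : Filter.Tendsto φ (nhdsWithin D (Ioo 0 D)) (nhds (φ D)) :=
      ((hφcont D (right_mem_Icc.2 hD.le)).mono_left (nhdsWithin_mono _ Ioo_subset_Icc_self))
    have hz : Filter.Tendsto φ (nhdsWithin D (Ioo 0 D)) (nhds 0) := by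
      refine Filter.Tendsto.congr' ?_ tendsto_const_nhds
      filter_upwards [self_mem_nhdsWithin] with u hu
      exact (hφzero u hu).symm
    have := tendsto_nhds_unique hc hz
    rw [hD']; exact this
  · exact hφzero t ⟨h0, hD'⟩
end

section
/- Let β ≥ 1 and μ ∈ ℝ with μ ≠ (2j+1)(2j+1+β) for all j ∈ ℕ. Suppose (a_{2j+1})_{j≥0} satisfies a_{2j+3} = ((2j+1)(2j+1+β) − μ)/((2j+3)(2j+2)) · a_{2j+1} with a_1 ≠ 0. Then there exist C > 0 and j₀ ∈ ℕ such that |a_{2j+1}| ≥ C/(2j+3) for all j ≥ j₀; in particular the series Σ a_{2j+1} x^{2j+1} is unbounded as x → 1⁻ or x → −1⁺. -/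
open Set Finset Filter

lemma weier_aux (ε : ℕ → ℝ) (h0 : ∀ k, 0 ≤ ε k) (h1 : ∀ k, ε k ≤ 1) (n : ℕ) :
    1 - ∑ k ∈ range n, ε k ≤ ∏ k ∈ range n, (1 - ε k) := by
  induction n with
  | zero => simp
  | succ n ih =>
    rw [Finset.prod_range_succ, Finset.sum_range_succ]
    have hP : (0:ℝ) ≤ ∏ k ∈ range n, (1 - ε k) :=
      Finset.prod_nonneg fun k _ => by linarith [h1 k]
    have := mul_le_mul_of_nonneg_right ih (by linarith [h1 n] : (0:ℝ) ≤ 1 - ε n)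
    have hS : (0:ℝ) ≤ ∑ k ∈ range n, ε k := Finset.sum_nonneg fun k _ => h0 k
    nlinarith [h0 n]

set_option maxHeartbeats 2000000 in
theorem odd_coefficients_growth (β μ : ℝ) (hβ : 1 ≤ β)
    (hμ : ∀ j : ℕ, μ ≠ (2 * j + 1) * (2 * j + 1 + β))
    (b : ℕ → ℝ)
    (hrec : ∀ j : ℕ, b (j + 1) =
      (((2 * j + 1) * (2 * j + 1 + β) - μ) / ((2 * j + 3) * (2 * j + 2))) * b j)
    (hb0 : b 0 ≠ 0) :
    (∃ C > 0, ∃ j₀ : ℕ, ∀ j ≥ j₀, |b j| ≥ C / (2 * j + 3)) ∧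
    ¬ ∃ M : ℝ, ∀ x ∈ Ioo (-1 : ℝ) 1, |∑' j : ℕ, b j * x ^ (2 * j + 1)| ≤ M := by
  have hDpos : ∀ j : ℕ, (0:ℝ) < (2 * j + 3) * (2 * j + 2) := by
    intro j; positivity
  have hNne : ∀ j : ℕ, ((2 * j + 1) * (2 * j + 1 + β) - μ : ℝ) ≠ 0 := by
    intro j; exact sub_ne_zero_of_ne (fun h => hμ j h.symm)
  have hbne : ∀ j : ℕ, b j ≠ 0 := by
    intro j; induction j with
    | zero => exact hb0
    | succ j ih =>
      rw [hrec j]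
      exact mul_ne_zero (div_ne_zero (hNne j) (hDpos j).ne') ih
  -- thresholds
  set j₁ : ℕ := ⌈|μ|⌉₊ with hj₁def
  have hμle : ∀ j : ℕ, j₁ ≤ j → |μ| ≤ (j:ℝ) := fun j hj => Nat.ceil_le.mp hj
  have hNpos : ∀ j : ℕ, j₁ ≤ j → (0:ℝ) < (2 * j + 1) * (2 * j + 1 + β) - μ := by
    intro j hj
    have h1 := hμle j hj
    have h2 : (0:ℝ) ≤ (j:ℝ) := Nat.cast_nonneg j
    nlinarith [abs_nonneg μ, le_abs_self μ]
  have hrpos : ∀ j : ℕ, j₁ ≤ j →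
      (0:ℝ) < ((2 * j + 1) * (2 * j + 1 + β) - μ) / ((2 * j + 3) * (2 * j + 2)) :=
    fun j hj => div_pos (hNpos j hj) (hDpos j)
  set K : ℝ := 4 + 3 * |μ| with hKdef
  have hK4 : (4:ℝ) ≤ K := by have := abs_nonneg μ; simp only [hKdef]; linarith
  set j₀ : ℕ := max j₁ ⌈K⌉₊ with hj₀def
  have hj₀1 : j₁ ≤ j₀ := le_max_left _ _
  have hKj : ∀ j : ℕ, j₀ ≤ j → K ≤ (j:ℝ) :=
    fun j hj => Nat.ceil_le.mp (le_trans (le_max_right _ _) hj)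
  set ε : ℕ → ℝ := fun j => K / ((2 * j + 2) * (2 * j + 4)) with hεdef
  have hεnn : ∀ j, 0 ≤ ε j := by
    intro j
    have : (0:ℝ) < (2 * j + 2) * (2 * j + 4) := by positivity
    exact div_nonneg (by linarith) this.le
  have hεle : ∀ j : ℕ, j₀ ≤ j → ε j ≤ 1/2 := by
    intro j hj
    have hE : (0:ℝ) < (2 * j + 2) * (2 * j + 4) := by positivity
    rw [hεdef, div_le_iff₀ hE]
    have := hKj j hj
    have hc : (j:ℝ) ≤ 2 * j + 2 := by linarith [Nat.cast_nonneg (α := ℝ) j]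
    nlinarith [Nat.cast_nonneg (α := ℝ) j]
  -- key step inequality
  have hfac : ∀ j : ℕ, j₁ ≤ j →
      (1 - ε j) * (2 * j + 3)
        ≤ (2 * j + 5) * (((2 * j + 1) * (2 * j + 1 + β) - μ) / ((2 * j + 3) * (2 * j + 2))) := by
    intro j hj
    have hD : (0:ℝ) < (2 * j + 3) * (2 * j + 2) := hDpos j
    have hE : (0:ℝ) < (2 * j + 2) * (2 * j + 4) := by positivity
    have hm := hμle j hj
    have ht : (0:ℝ) ≤ (j:ℝ) := Nat.cast_nonneg j
    have hmu : μ ≤ |μ| := le_abs_self μ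
    have hm0 : (0:ℝ) ≤ |μ| := abs_nonneg μ
    rw [hεdef, ← mul_div_assoc, le_div_iff₀ hD, one_sub_div hE.ne', div_mul_eq_mul_div,
      div_mul_eq_mul_div, div_le_iff₀ hE]
    nlinarith [mul_nonneg (mul_nonneg hm0 ht) ht, mul_nonneg hm0 ht, sq_nonneg (j:ℝ),
      mul_nonneg (mul_nonneg ht ht) ht,
      mul_nonneg (mul_nonneg (mul_nonneg (sub_nonneg.mpr hβ) ht) ht) ht,
      mul_nonneg (mul_nonneg (sub_nonneg.mpr hβ) ht) ht,
      mul_nonneg (sub_nonneg.mpr hβ) ht, sub_nonneg.mpr hβ,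
      mul_nonneg (mul_nonneg (mul_nonneg (sub_nonneg.mpr hβ) ht) ht) (mul_nonneg ht ht)]
  have hstep : ∀ j : ℕ, j₁ ≤ j →
      (1 - ε j) * ((2 * j + 3) * |b j|) ≤ (2 * j + 5) * |b (j + 1)| := by
    intro j hj
    rw [hrec j, abs_mul, abs_of_pos (hrpos j hj)]
    nlinarith [mul_le_mul_of_nonneg_right (hfac j hj) (abs_nonneg (b j))]
  set A : ℝ := (2 * j₀ + 3) * |b j₀| with hAdef
  have hApos : 0 < A := by
    apply mul_pos (by positivity) (abs_pos.mpr (hbne j₀))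
  have hgrow : ∀ n : ℕ, A * ∏ k ∈ range n, (1 - ε (j₀ + k))
      ≤ (2 * (j₀ + n) + 3 : ℝ) * |b (j₀ + n)| := by
    intro n
    induction n with
    | zero => simp [hAdef]
    | succ n ih =>
      rw [Finset.prod_range_succ, ← mul_assoc]
      have h1 : (1 - ε (j₀ + n)) * ((2 * (j₀ + n) + 3 : ℝ) * |b (j₀ + n)|)
          ≤ (2 * (j₀ + n) + 5) * |b (j₀ + n + 1)| := by
        have := hstep (j₀ + n) (le_trans hj₀1 (Nat.le_add_right _ _))
        push_cast at this ⊢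
        convert this using 2 <;> ring
      have h2 : (0:ℝ) ≤ 1 - ε (j₀ + n) := by
        linarith [hεle (j₀ + n) (Nat.le_add_right _ _)]
      calc (A * ∏ k ∈ range n, (1 - ε (j₀ + k))) * (1 - ε (j₀ + n))
            ≤ ((2 * ((j₀:ℝ) + n) + 3) * |b (j₀ + n)|) * (1 - ε (j₀ + n)) :=
            mul_le_mul_of_nonneg_right ih h2
        _ = (1 - ε (j₀ + n)) * ((2 * ((j₀:ℝ) + n) + 3) * |b (j₀ + n)|) := by ring
        _ ≤ (2 * ((j₀:ℝ) + n) + 5) * |b (j₀ + n + 1)| := h1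
        _ = (2 * ((j₀:ℝ) + ((n+1 : ℕ):ℝ)) + 3) * |b (j₀ + (n + 1))| := by push_cast; ring
  -- sum of epsilons is at most 1/2
  have hsumε : ∀ n : ℕ, ∑ k ∈ range n, ε (j₀ + k) ≤ 1/2 := by
    intro n
    set f : ℕ → ℝ := fun k => (K/2) / (2 * (j₀ + k) + 2) with hfdef
    have hεf : ∀ k, ε (j₀ + k) = f k - f (k + 1) := by
      intro k
      simp only [hεdef, hfdef]
      have h1 : (0:ℝ) < 2 * ((j₀:ℝ) + k) + 2 := by positivity
      have h2 : (0:ℝ) < 2 * ((j₀:ℝ) + (k+1)) + 2 := by positivity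
      push_cast
      rw [div_sub_div _ _ (by linarith) (by linarith)]
      rw [div_eq_div_iff (by positivity) (by positivity)]
      push_cast
      ring
    calc ∑ k ∈ range n, ε (j₀ + k) = ∑ k ∈ range n, (f k - f (k+1)) := by
          exact Finset.sum_congr rfl fun k _ => hεf k
      _ = f 0 - f n := Finset.sum_range_sub' f n
      _ ≤ f 0 := by
          have : (0:ℝ) ≤ f n := by
            apply div_nonneg (by linarith) (by positivity)
          linarith
      _ ≤ 1/2 := by
          simp only [hfdef]
          rw [div_le_iff₀ (by positivity)]
          have := hKj j₀ le_rfl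
          push_cast
          linarith [Nat.cast_nonneg (α := ℝ) j₀]
  have hprod : ∀ n : ℕ, (1/2 : ℝ) ≤ ∏ k ∈ range n, (1 - ε (j₀ + k)) := by
    intro n
    have := weier_aux (fun k => ε (j₀ + k)) (fun k => hεnn _)
      (fun k => le_trans (hεle (j₀ + k) (Nat.le_add_right _ _)) (by norm_num)) n
    have h2 := hsumε n
    linarith
  -- growth conclusion
  have hgrowth : ∀ j : ℕ, j₀ ≤ j → A/2 / (2 * j + 3) ≤ |b j| := by
    intro j hj
    obtain ⟨n, rfl⟩ := Nat.exists_eq_add_of_le hj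
    have h1 := hgrow n
    have h2 := hprod n
    have h3 : A * (1/2) ≤ (2 * ((j₀:ℝ) + n) + 3) * |b (j₀ + n)| := by
      calc A * (1/2) ≤ A * ∏ k ∈ range n, (1 - ε (j₀ + k)) :=
            mul_le_mul_of_nonneg_left h2 hApos.le
        _ ≤ (2 * (j₀ + n) + 3 : ℝ) * |b (j₀ + n)| := h1
        _ = (2 * ((j₀:ℝ) + n) + 3) * |b (j₀ + n)| := by push_cast; ring_nf
    rw [div_div, div_le_iff₀ (by positivity)]
    push_cast
    nlinarith [abs_nonneg (b (j₀ + n))]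
  constructor
  · exact ⟨A/2, by positivity, j₀, fun j hj => hgrowth j hj⟩
  · rintro ⟨M, hM⟩
    set C : ℝ := A/2 with hCdef
    have hC : 0 < C := by positivity
    -- sign of the tail coefficients
    set σ : ℝ := if 0 < b j₀ then 1 else -1 with hσdef
    have hσ : σ = 1 ∨ σ = -1 := by
      by_cases h : 0 < b j₀ <;> simp [hσdef, h]
    have hσabs : |σ| = 1 := by rcases hσ with h | h <;> simp [h]
    have hσsign : ∀ n : ℕ, σ * b (j₀ + n) = |b (j₀ + n)| := by
      intro n
      induction n with
      | zero =>
        by_cases h : 0 < b j₀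
        · simp [hσdef, h, abs_of_pos h]
        · have hlt : b j₀ < 0 := lt_of_le_of_ne (not_lt.mp h) (hbne j₀)
          simp [hσdef, h, abs_of_neg hlt]
      | succ n ih =>
        have hr := hrpos (j₀ + n) (le_trans hj₀1 (Nat.le_add_right _ _))
        rw [show j₀ + (n+1) = (j₀ + n) + 1 from rfl, hrec (j₀+n), abs_mul, abs_of_pos hr,
          ← ih]
        ring
    set H : ℝ := ∑ i ∈ range j₀, |b i| with hHdef
    have hH : 0 ≤ H := Finset.sum_nonneg fun i _ => abs_nonneg _
    -- choose m via divergence of the harmonic series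
    obtain ⟨m, hm⟩ := (Real.tendsto_sum_range_one_div_nat_succ_atTop.eventually_ge_atTop
      (2*(2*(j₀:ℝ)+3)*(M+H+1)/C)).exists
    -- choose x close to 1
    set k : ℕ := 2*(m+j₀)+3 with hkdef
    have hkpos : (0:ℝ) < (k:ℝ) := by positivity
    set x : ℝ := 1 - 1/(2*(k:ℝ)) with hxdef
    have hk1 : (1:ℝ) ≤ (k:ℝ) := by
      have : 1 ≤ k := by omega
      exact_mod_cast this
    have hx0 : 0 < x := by
      rw [hxdef]
      have h1 : 1/(2*(k:ℝ)) ≤ 1/2 := by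
        rw [div_le_div_iff₀ (by positivity) two_pos]
        linarith
      linarith
    have hx1 : x < 1 := by
      rw [hxdef]
      have : 0 < 1/(2*(k:ℝ)) := by positivity
      linarith
    clear_value k x
    have hxpow : ∀ e : ℕ, e ≤ k → (1/2 : ℝ) ≤ x ^ e := by
      intro e he
      have h1 : (1/2 : ℝ) ≤ x ^ k := by
        have hb2 : (-2 : ℝ) ≤ -(1/(2*(k:ℝ))) := by
          have : 1/(2*(k:ℝ)) ≤ 1 := by
            rw [div_le_one (by positivity)]
            linarith
          linarith
        have := one_add_mul_le_pow hb2 k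
        have heq : (1 : ℝ) + (k:ℝ) * (-(1/(2*(k:ℝ)))) = 1/2 := by
          field_simp
          ring
        rw [heq] at this
        rw [show (1 : ℝ) + -(1/(2*(k:ℝ))) = x by rw [hxdef]; ring] at this
        exact this
      calc (1/2 : ℝ) ≤ x ^ k := h1
        _ ≤ x ^ e := pow_le_pow_of_le_one hx0.le hx1.le he
    -- summability
    have hxsq : x^2 < 1 := by nlinarith
    set δ : ℝ := (1 - x^2)/(2*x^2) with hδdef
    have hδ : 0 < δ := by
      apply div_pos (by linarith) (by positivity)
    set c : ℝ := (x^2 + 1)/2 with hcdef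
    have hc1 : c < 1 := by
      rw [hcdef]
      nlinarith [hxsq]
    have hcx : (1 + δ) * x^2 = c := by
      rw [hδdef, hcdef]
      field_simp
      ring
    set j₂ : ℕ := ⌈(3*β+|μ|)/(4*δ)⌉₊ + 1 with hj₂def
    have hub : ∀ j : ℕ, max j₁ j₂ ≤ j →
        ((2 * j + 1) * (2 * j + 1 + β) - μ : ℝ) ≤ (1+δ) * ((2 * j + 3) * (2 * j + 2)) := by
      intro j hj
      have hj2 : j₂ ≤ j := le_trans (le_max_right _ _) hj
      have hjq : (3*β+|μ|)/(4*δ) ≤ (j:ℝ) := by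
        calc (3*β+|μ|)/(4*δ) ≤ (⌈(3*β+|μ|)/(4*δ)⌉₊ : ℝ) := Nat.le_ceil _
          _ ≤ (j₂ : ℝ) := by
              rw [hj₂def]; push_cast; linarith
          _ ≤ (j:ℝ) := by exact_mod_cast Nat.cast_le.mpr hj2
      have hq : 3*β+|μ| ≤ (j:ℝ) * (4*δ) := (div_le_iff₀ (by positivity)).mp hjq
      have hj1 : (1:ℝ) ≤ (j:ℝ) := by
        have : 1 ≤ j₂ := Nat.le_add_left 1 _
        exact_mod_cast le_trans this hj2
      have hμlb : -|μ| ≤ μ := neg_abs_le μ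
      nlinarith [mul_le_mul_of_nonneg_right hq (Nat.cast_nonneg (α := ℝ) j),
        mul_nonneg hδ.le (Nat.cast_nonneg (α := ℝ) j), abs_nonneg μ,
        mul_nonneg (sub_nonneg.mpr hβ) (sub_nonneg.mpr hj1), hδ.le,
        mul_nonneg (abs_nonneg μ) (sub_nonneg.mpr hj1)]
    have hsummable : Summable (fun j : ℕ => b j * x ^ (2*j+1)) := by
      apply summable_of_ratio_norm_eventually_le hc1
      filter_upwards [eventually_ge_atTop (max j₁ j₂)] with j hj
      have hj1 : j₁ ≤ j := le_trans (le_max_left _ _) hj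
      have hr := hrpos j hj1
      have hNp := hNpos j hj1
      have hrle : ((2 * j + 1) * (2 * j + 1 + β) - μ) / ((2 * j + 3) * (2 * j + 2)) ≤ 1 + δ := by
        rw [div_le_iff₀ (hDpos j)]
        exact hub j hj
      have h1 : ((2 * j + 1) * (2 * j + 1 + β) - μ) / ((2 * j + 3) * (2 * j + 2)) * x^2 ≤ c := by
        rw [← hcx]
        exact mul_le_mul_of_nonneg_right hrle (sq_nonneg x)
      have hnorm1 : ‖b (j+1) * x ^ (2*(j+1)+1)‖
          = (((2 * ↑j + 1) * (2 * ↑j + 1 + β) - μ) / ((2 * ↑j + 3) * (2 * ↑j + 2)) * x^2) *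
            (|b j| * x ^ (2*j+1)) := by
        rw [Real.norm_eq_abs, hrec j, show 2*(j+1)+1 = (2*j+1)+2 from by ring, pow_add]
        rw [abs_mul, abs_mul, abs_of_pos hr, abs_mul,
          abs_of_pos (pow_pos hx0 (2*j+1)), abs_of_pos (pow_pos hx0 2)]
        ring
      have hnorm2 : ‖b j * x ^ (2*j+1)‖ = |b j| * x ^ (2*j+1) := by
        rw [Real.norm_eq_abs, abs_mul, abs_of_pos (pow_pos hx0 (2*j+1))]
      rw [hnorm1, hnorm2]
      exact mul_le_mul_of_nonneg_right h1
        (mul_nonneg (abs_nonneg _) (pow_pos hx0 (2*j+1)).le)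
    -- the tail
    set t : ℕ → ℝ := fun j => b j * x ^ (2*j+1) with htdef
    have hsplit := Summable.sum_add_tsum_nat_add (f := t) j₀ hsummable
    set g : ℕ → ℝ := fun i => |b (j₀ + i)| * x ^ (2*(j₀+i)+1) with hgdef
    have hgt : ∀ i : ℕ, σ * t (i + j₀) = g i := by
      intro i
      simp only [htdef, hgdef]
      rw [Nat.add_comm i j₀, ← hσsign i]
      ring
    have hgnn : ∀ i, 0 ≤ g i := by
      intro i
      exact mul_nonneg (abs_nonneg _) (by positivity)
    have hgsum : Summable g := by
      have h1 : Summable (fun i => t (i + j₀)) := (summable_nat_add_iff j₀).mpr hsummable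
      have h2 : Summable (fun i => σ * t (i + j₀)) := h1.mul_left σ
      exact h2.congr hgt
    have hglb : ∀ i ∈ range m, (C/(2*(2*(j₀:ℝ)+3))) * (1/((i:ℝ)+1)) ≤ g i := by
      intro i hi
      have him : i < m := Finset.mem_range.mp hi
      have hb1 : C/(2*((j₀:ℝ)+i)+3) ≤ |b (j₀ + i)| := by
        have := hgrowth (j₀ + i) (Nat.le_add_right _ _)
        calc C/(2*((j₀:ℝ)+i)+3) = C/(2*((j₀+i:ℕ):ℝ)+3) := by push_cast; ring_nf
          _ ≤ |b (j₀ + i)| := this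
      have hb2 : (1/2 : ℝ) ≤ x ^ (2*(j₀+i)+1) := by
        apply hxpow
        omega
      have hb3 : (0:ℝ) < 2*((j₀:ℝ)+i)+3 := by positivity
      have hb4 : C/((2*(j₀:ℝ)+3)*((i:ℝ)+1)) ≤ C/(2*((j₀:ℝ)+i)+3) := by
        apply div_le_div_of_nonneg_left hC.le hb3
        nlinarith [Nat.cast_nonneg (α := ℝ) i, Nat.cast_nonneg (α := ℝ) j₀]
      have hb5 : C/((2*(j₀:ℝ)+3)*((i:ℝ)+1)) = (C/(2*(2*(j₀:ℝ)+3))) * (1/((i:ℝ)+1)) * 2 := by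
        field_simp
      calc (C/(2*(2*(j₀:ℝ)+3))) * (1/((i:ℝ)+1))
            = (C/((2*(j₀:ℝ)+3)*((i:ℝ)+1))) * (1/2) := by rw [hb5]; ring
        _ ≤ |b (j₀ + i)| * x ^ (2*(j₀+i)+1) := by
            apply mul_le_mul (le_trans hb4 hb1) hb2 (by norm_num)
            exact abs_nonneg _
        _ = g i := rfl
    have htailge : M + H + 1 ≤ ∑' i, g i := by
      have h1 : ∑ i ∈ range m, (C/(2*(2*(j₀:ℝ)+3))) * (1/((i:ℝ)+1)) ≤ ∑ i ∈ range m, g i :=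
        Finset.sum_le_sum hglb
      have h2 : ∑ i ∈ range m, g i ≤ ∑' i, g i :=
        Summable.sum_le_tsum (range m) (fun i _ => hgnn i) hgsum
      have h3 : ∑ i ∈ range m, (C/(2*(2*(j₀:ℝ)+3))) * (1/((i:ℝ)+1))
          = (C/(2*(2*(j₀:ℝ)+3))) * ∑ i ∈ range m, (1/((i:ℝ)+1)) := by
        rw [Finset.mul_sum]
      have h4 : (0:ℝ) < 2*(2*(j₀:ℝ)+3) := by positivity
      have h5 : M + H + 1 ≤ (C/(2*(2*(j₀:ℝ)+3))) * ∑ i ∈ range m, (1/((i:ℝ)+1)) := by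
        have h6 : (C/(2*(2*(j₀:ℝ)+3))) * (2*(2*(j₀:ℝ)+3)*(M+H+1)/C)
            ≤ (C/(2*(2*(j₀:ℝ)+3))) * ∑ i ∈ range m, (1/((i:ℝ)+1)) := by
          apply mul_le_mul_of_nonneg_left _ (by positivity)
          exact hm
        calc M + H + 1 = (C/(2*(2*(j₀:ℝ)+3))) * (2*(2*(j₀:ℝ)+3)*(M+H+1)/C) := by
              field_simp
          _ ≤ _ := h6
      linarith
    -- head bound
    have hhead : |∑ i ∈ range j₀, t i| ≤ H := by
      calc |∑ i ∈ range j₀, t i| ≤ ∑ i ∈ range j₀, |t i| := Finset.abs_sum_le_sum_abs _ _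
        _ ≤ ∑ i ∈ range j₀, |b i| := by
            apply Finset.sum_le_sum
            intro i _
            simp only [htdef, abs_mul]
            have hxp1 : |x ^ (2*i+1)| ≤ 1 := by
              rw [abs_pow, abs_of_pos hx0]
              exact pow_le_one₀ hx0.le hx1.le
            nlinarith [abs_nonneg (b i)]
        _ = H := rfl
    -- contradiction
    have hMF := hM x ⟨by linarith, hx1⟩
    have htail_eq : σ * (∑' i, t (i + j₀)) = ∑' i, g i := by
      rw [← tsum_mul_left]
      exact tsum_congr hgt
    have hheadge : -H ≤ σ * ∑ i ∈ range j₀, t i := by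
      have h1 : |σ * ∑ i ∈ range j₀, t i| ≤ H := by
        rw [abs_mul, hσabs, one_mul]; exact hhead
      linarith [neg_abs_le (σ * ∑ i ∈ range j₀, t i)]
    have hFle : σ * (∑' i, t i) ≤ M := by
      have h1 : |σ * ∑' i, t i| = |∑' i, t i| := by rw [abs_mul, hσabs, one_mul]
      calc σ * ∑' i, t i ≤ |σ * ∑' i, t i| := le_abs_self _
        _ = |∑' i, t i| := h1
        _ ≤ M := hMF
    have hFge : M + 1 ≤ σ * ∑' i, t i := by
      have he : σ * ∑' i, t i = σ * ∑ i ∈ range j₀, t i + σ * ∑' i, t (i + j₀) := by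
        rw [← hsplit]; ring
      rw [he, htail_eq]
      linarith
    linarith
end
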